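/- hom(E_7, T(18,3,32)) = 81548856 and hom(P_7, T(18,3,32)) = 81558090; in particular hom(E_7, T(18,3,32)) < hom(P_7, T(18,3,32)). -/

import Mathlib

/-- A graph, possibly with loops but without multiple edges: a symmetric
adjacency relation on the vertex type. -/
structure LoopGraph (V : Type*) where
  Adj : V → V → Prop
  symm : ∀ {u v}, Adj u v → Adj v u

/-- `f` is a homomorphism (H-coloring) from `G` to `H`. -/
def LoopGraph.IsHom {A B : Type*} (G : LoopGraph A) (H : LoopGraph B) (f : A → B) : Prop :=
  ∀ ⦃x y⦄, G.Adj x y → H.Adj (f x) (f y)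

/-- The number of homomorphisms from `G` to `H`. -/
noncomputable def homCount {A B : Type*} (G : LoopGraph A) (H : LoopGraph B) : ℕ :=
  Nat.card {f : A → B // G.IsHom H f}

/-- `e` is an automorphism of `H`. -/
def IsAut {V : Type*} (H : LoopGraph V) (e : V ≃ V) : Prop :=
  ∀ a b, H.Adj (e a) (e b) ↔ H.Adj a b

/-- `u` and `v` are automorphically similar in `H`. -/
def AutSim {V : Type*} (H : LoopGraph V) (u v : V) : Prop :=
  ∃ e : V ≃ V, IsAut H e ∧ e u = v

/-- The path on `n` vertices. -/
def pathGraph (n : ℕ) : LoopGraph (Fin n) where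
  Adj i j := j.val = i.val + 1 ∨ i.val = j.val + 1
  symm h := h.symm

/-- Upward adjacency for `eGraph`. -/
def eUp (n : ℕ) (i j : Fin n) : Prop :=
  (j.val = i.val + 1 ∧ j.val ≤ n - 2) ∨ (i.val = n - 4 ∧ j.val = n - 1)

/-- The tree `E_n`: the path on `n-1` vertices `0,…,n-2` with a pendant
vertex `n-1` attached to vertex `n-4` (distance 2 from the end `n-2`). -/
def eGraph (n : ℕ) : LoopGraph (Fin n) where
  Adj i j := eUp n i j ∨ eUp n j i
  symm h := h.symm

/-- Vertices of the spherically symmetric rooted tree `T(x,y,z)`. -/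
abbrev TVert (x y z : ℕ) : Type :=
  Unit ⊕ Fin x ⊕ (Fin x × Fin y) ⊕ (Fin x × Fin y × Fin z)

/-- Parent-to-child adjacency in `T(x,y,z)`. -/
def tUp (x y z : ℕ) : TVert x y z → TVert x y z → Prop
  | Sum.inl _, Sum.inr (Sum.inl _) => True
  | Sum.inr (Sum.inl i), Sum.inr (Sum.inr (Sum.inl p)) => p.1 = i
  | Sum.inr (Sum.inr (Sum.inl p)), Sum.inr (Sum.inr (Sum.inr q)) =>
      q.1 = p.1 ∧ q.2.1 = p.2
  | _, _ => False

/-- The tree `T(x,y,z)`: the root has `x` children, each child has `y`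
children, each grandchild has `z` children. -/
def tGraph (x y z : ℕ) : LoopGraph (TVert x y z) where
  Adj a b := tUp x y z a b ∨ tUp x y z b a
  symm h := h.symm

/-- `T̂(x,y,z)`: `T(x,y,z)` with a loop added at the root. -/
def tHatGraph (x y z : ℕ) : LoopGraph (TVert x y z) where
  Adj a b := tUp x y z a b ∨ tUp x y z b a ∨ (a = Sum.inl () ∧ b = Sum.inl ())
  symm := by
    rintro a b (h | h | ⟨h1, h2⟩)
    · exact Or.inr (Or.inl h)
    · exact Or.inl h
    · exact Or.inr (Or.inr ⟨h2, h1⟩)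

/-- The distance level of a vertex of `T(x,y,z)` from the root. -/
def tLevel {x y z : ℕ} : TVert x y z → Fin 4
  | Sum.inl _ => 0
  | Sum.inr (Sum.inl _) => 1
  | Sum.inr (Sum.inr (Sum.inl _)) => 2
  | Sum.inr (Sum.inr (Sum.inr _)) => 3

/-- Upward adjacency for the path-like extension of `G` at `v0`. -/
def extUp {A : Type*} (G : LoopGraph A) (v0 : A) (n : ℕ) :
    (A ⊕ Fin n) → (A ⊕ Fin n) → Prop := fun a b =>
  (∃ u w, G.Adj u w ∧ a = Sum.inl u ∧ b = Sum.inl w) ∨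
  (∃ i : Fin n, i.val = 0 ∧ a = Sum.inl v0 ∧ b = Sum.inr i) ∨
  (∃ i j : Fin n, j.val = i.val + 1 ∧ a = Sum.inr i ∧ b = Sum.inr j)

/-- `G_n`: the graph obtained from `G_0 = G` by appending a path of `n` new
vertices at `v0`. -/
def pathAppend {A : Type*} (G : LoopGraph A) (v0 : A) (n : ℕ) : LoopGraph (A ⊕ Fin n) where
  Adj a b := extUp G v0 n a b ∨ extUp G v0 n b a
  symm h := h.symm

/-!
A homomorphism from a tree into `H` is a family of walks in `H`: a homomorphism from the path
`P_{n+1}` is a walk of length `n`, and `E_7` consists of three paths of lengths `3, 2, 1` glued at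
its branch vertex `3`, so its homomorphisms correspond to a vertex `v` of `H` together with three
walks from `v` of these lengths. In `T(x,y,z)` the number of walks of a given length from a vertex
depends only on the vertex's level and satisfies a linear recursion in four variables, so both
counts reduce to a small computation.
-/

instance (n : ℕ) : DecidableRel (eUp n) := fun _ _ => by unfold eUp; infer_instance

instance (n : ℕ) : DecidableRel (eGraph n).Adj := fun a b =>
  inferInstanceAs (Decidable (eUp n a b ∨ eUp n b a))

instance (x y z : ℕ) : DecidableRel (tUp x y z) := fun a b => by
  rcases a with _ | a | a | a <;> rcases b with _ | b | b | b <;> unfold tUp <;> infer_instance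

instance (x y z : ℕ) : DecidableRel (tGraph x y z).Adj := fun a b =>
  inferInstanceAs (Decidable (tUp x y z a b ∨ tUp x y z b a))

namespace LoopGraph

variable {V : Type*} (H : LoopGraph V)

def WalkFrom (n : ℕ) (v : V) : Type _ :=
  {w : Fin (n + 1) → V // w 0 = v ∧ ∀ i : Fin n, H.Adj (w i.castSucc) (w i.succ)}

instance [Finite V] (n : ℕ) (v : V) : Finite (H.WalkFrom n v) :=
  inferInstanceAs (Finite (Subtype _))

theorem WalkFrom.adj_start {n : ℕ} {v : V} (w : H.WalkFrom (n + 1) v) : H.Adj v (w.1 1) := by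
  simpa [w.2.1] using w.2.2 0

def walkFromZeroEquiv (v : V) : H.WalkFrom 0 v ≃ Unit where
  toFun _ := ()
  invFun _ := ⟨fun _ => v, rfl, fun i => i.elim0⟩
  left_inv w := Subtype.ext <| funext fun i => by
    rw [Fin.fin_one_eq_zero i]; exact w.2.1.symm
  right_inv _ := rfl

def walkFromSuccEquiv (n : ℕ) (v : V) :
    H.WalkFrom (n + 1) v ≃ Σ u : {u // H.Adj v u}, H.WalkFrom n u where
  toFun w := ⟨⟨w.1 1, w.adj_start⟩, Fin.tail w.1, rfl,
    fun i => by simpa [Fin.tail, ← Fin.succ_castSucc] using w.2.2 i.succ⟩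
  invFun p := ⟨Fin.cons v p.2.1, rfl, fun i => by
    refine Fin.cases ?_ (fun j => ?_) i
    · simpa [p.2.2.1] using p.1.2
    · simpa [← Fin.succ_castSucc] using p.2.2.2 j⟩
  left_inv w := Subtype.ext <| by simp [← w.2.1]
  right_inv p := by
    obtain ⟨⟨u, hu⟩, w, hw0, _⟩ := p
    obtain rfl : w 0 = u := hw0
    rfl

theorem isHom_pathGraph_iff {n : ℕ} {f : Fin (n + 1) → V} :
    (pathGraph (n + 1)).IsHom H f ↔ ∀ i : Fin n, H.Adj (f i.castSucc) (f i.succ) := by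
  refine ⟨fun hf i => hf (Or.inl (by simp)), fun hf a b hab => ?_⟩
  rcases hab with hab | hab
  · convert hf ⟨a, by omega⟩ using 2 <;> simp [Fin.ext_iff, hab]
  · convert H.symm (hf ⟨b, by omega⟩) using 2 <;> simp [Fin.ext_iff, hab]

def pathGraphHomEquiv (n : ℕ) :
    {f : Fin (n + 1) → V // (pathGraph (n + 1)).IsHom H f} ≃ Σ v, H.WalkFrom n v where
  toFun f := ⟨f.1 0, f.1, rfl, H.isHom_pathGraph_iff.1 f.2⟩
  invFun w := ⟨w.2.1, H.isHom_pathGraph_iff.2 w.2.2.2⟩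
  left_inv _ := rfl
  right_inv w := by
    obtain ⟨v, w, hw0, _⟩ := w
    obtain rfl : w 0 = v := hw0
    rfl

theorem isHom_eGraph_seven_iff {f : Fin 7 → V} :
    (eGraph 7).IsHom H f ↔ H.Adj (f 3) (f 2) ∧ H.Adj (f 2) (f 1) ∧ H.Adj (f 1) (f 0) ∧
      H.Adj (f 3) (f 4) ∧ H.Adj (f 4) (f 5) ∧ H.Adj (f 3) (f 6) := by
  refine ⟨fun hf => ⟨hf (by decide), hf (by decide), hf (by decide), hf (by decide),
    hf (by decide), hf (by decide)⟩, ?_⟩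
  rintro ⟨h32, h21, h10, h34, h45, h36⟩ a b hab
  fin_cases a <;> fin_cases b <;> first
    | exact absurd hab (by decide)
    | assumption
    | exact H.symm ‹_›

def eGraphSevenHomEquiv :
    {f : Fin 7 → V // (eGraph 7).IsHom H f} ≃
      Σ v, H.WalkFrom 3 v × H.WalkFrom 2 v × H.WalkFrom 1 v where
  toFun f :=
    ⟨f.1 3,
      ⟨![f.1 3, f.1 2, f.1 1, f.1 0], rfl, fun i => by
        obtain ⟨h32, h21, h10, -⟩ := H.isHom_eGraph_seven_iff.1 f.2
        fin_cases i; exacts [h32, h21, h10]⟩,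
      ⟨![f.1 3, f.1 4, f.1 5], rfl, fun i => by
        obtain ⟨-, -, -, h34, h45, -⟩ := H.isHom_eGraph_seven_iff.1 f.2
        fin_cases i; exacts [h34, h45]⟩,
      ⟨![f.1 3, f.1 6], rfl, fun i => by
        obtain ⟨-, -, -, -, -, h36⟩ := H.isHom_eGraph_seven_iff.1 f.2
        fin_cases i; exact h36⟩⟩
  invFun := fun ⟨v, w₁, w₂, w₃⟩ =>
    ⟨![w₁.1 3, w₁.1 2, w₁.1 1, v, w₂.1 1, w₂.1 2, w₃.1 1], H.isHom_eGraph_seven_iff.2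
      ⟨w₁.adj_start, w₁.2.2 1, w₁.2.2 2, w₂.adj_start, w₂.2.2 1, w₃.adj_start⟩⟩
  left_inv f := Subtype.ext <| funext fun i => by fin_cases i <;> rfl
  right_inv := by
    rintro ⟨v, ⟨w₁, h₁, -⟩, ⟨w₂, h₂, -⟩, ⟨w₃, h₃, -⟩⟩
    refine Sigma.ext rfl (heq_of_eq (Prod.ext (Subtype.ext ?_) (Prod.ext (Subtype.ext ?_)
      (Subtype.ext ?_)))) <;> funext i <;> fin_cases i <;> simp [h₁, h₂, h₃]

variable [Fintype V] [DecidableRel H.Adj]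

def walkCount : ℕ → V → ℕ
  | 0, _ => 1
  | n + 1, v => ∑ u with H.Adj v u, walkCount n u

theorem card_walkFrom (n : ℕ) (v : V) : Nat.card (H.WalkFrom n v) = H.walkCount n v := by
  induction n generalizing v with
  | zero => simp [Nat.card_congr (H.walkFromZeroEquiv v), walkCount]
  | succ n ih =>
    rw [Nat.card_congr (H.walkFromSuccEquiv n v), Nat.card_sigma, walkCount,
      Finset.sum_subtype {u | H.Adj v u} (p := H.Adj v) (F := inferInstance) (by simp)]
    simp only [ih]

theorem homCount_pathGraph (n : ℕ) : homCount (pathGraph (n + 1)) H = ∑ v, H.walkCount n v := by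
  rw [homCount, Nat.card_congr (H.pathGraphHomEquiv n), Nat.card_sigma]
  simp only [card_walkFrom]

theorem homCount_eGraph_seven :
    homCount (eGraph 7) H = ∑ v, H.walkCount 3 v * H.walkCount 2 v * H.walkCount 1 v := by
  rw [homCount, Nat.card_congr H.eGraphSevenHomEquiv, Nat.card_sigma]
  simp only [Nat.card_prod, card_walkFrom, mul_assoc]

end LoopGraph

section Tree

variable {x y z : ℕ}

/-- Entry `ℓ` is the sum of `g` over the neighbours of a vertex of level `ℓ`: one parent
(if `ℓ > 0`) and `x`, `y`, `z` or no children. -/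
def levelStep (x y z : ℕ) (g : Fin 4 → ℕ) : Fin 4 → ℕ :=
  ![x * g 1, g 0 + y * g 2, g 1 + z * g 3, g 2]

theorem sum_adj_tGraph (g : Fin 4 → ℕ) (v : TVert x y z) :
    ∑ u with (tGraph x y z).Adj v u, g (tLevel u) = levelStep x y z g (tLevel v) := by
  rw [Finset.sum_filter]
  rcases v with _ | i | ⟨i, j⟩ | ⟨i, j, k⟩ <;>
    simp [Fintype.sum_sum_type, Fintype.sum_prod_type_right, tGraph, tUp, tLevel, levelStep, ite_and]

def levelWalks (x y z n : ℕ) : Fin 4 → ℕ :=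
  (levelStep x y z)^[n] 1

theorem walkCount_tGraph (n : ℕ) (v : TVert x y z) :
    (tGraph x y z).walkCount n v = levelWalks x y z n (tLevel v) := by
  induction n generalizing v with
  | zero => rfl
  | succ n ih =>
    simp only [LoopGraph.walkCount, ih, sum_adj_tGraph, levelWalks, Function.iterate_succ_apply']

theorem sum_tLevel (g : Fin 4 → ℕ) :
    ∑ v : TVert x y z, g (tLevel v) = g 0 + x * g 1 + x * y * g 2 + x * y * z * g 3 := by
  simp [Fintype.sum_sum_type, tLevel, mul_assoc, add_assoc]

end Tree

theorem stmt8 :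
    homCount (eGraph 7) (tGraph 18 3 32) = 81548856 ∧
    homCount (pathGraph 7) (tGraph 18 3 32) = 81558090 ∧
    homCount (eGraph 7) (tGraph 18 3 32) < homCount (pathGraph 7) (tGraph 18 3 32) := by
  have hE : homCount (eGraph 7) (tGraph 18 3 32) = 81548856 := by
    simp only [LoopGraph.homCount_eGraph_seven, walkCount_tGraph]
    exact (sum_tLevel fun ℓ => levelWalks 18 3 32 3 ℓ * levelWalks 18 3 32 2 ℓ *
      levelWalks 18 3 32 1 ℓ).trans (by decide)
  have hP : homCount (pathGraph 7) (tGraph 18 3 32) = 81558090 := by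
    simp only [LoopGraph.homCount_pathGraph, walkCount_tGraph]
    exact (sum_tLevel (levelWalks 18 3 32 6)).trans (by decide)
  exact ⟨hE, hP, by omega⟩
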